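/- Let A, B ∈ T(l×l×m, ℂ) be 3-way arrays with frontal slices A_1, …, A_m ∈ M(l, ℂ) and B_1, …, B_m ∈ M(l, ℂ), and assume that A_1, …, A_m are linearly independent and B_1, …, B_m are linearly independent. Define à ∈ T((l+m)×(l+m)×(l+m), ℂ) by its frontal slices: Ã_i = 0 for i ∈ [l], and for j ∈ [m], Ã_{l+j} is the (l+m)×(l+m) block matrix with block (1,1) (of size l×l) equal to A_j and all other blocks zero; define B̃ analogously from B. Then there exist unitary matrices P ∈ U(l, ℂ) and Q ∈ U(m, ℂ) with Pᵗ A P = B^Q if and only if there exists a unitary matrix P ∈ U(l+m, ℂ) with (Pᵗ Ã P)^P = B̃. -/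

import Mathlib

open Matrix

/-- The padding `Ã ∈ T((l+m)×(l+m)×(l+m), ℂ)` of `A ∈ T(l×l×m, ℂ)`: the first `l` frontal
slices are zero, and for `j ∈ [m]` the `(l+j)`-th frontal slice is the block matrix with
block `(1,1)` (of size `l×l`) equal to `Aⱼ` and all other blocks zero. -/
noncomputable def cubicPad {l m : ℕ} (A : Fin m → Matrix (Fin l) (Fin l) ℂ) :
    Fin (l + m) → Matrix (Fin (l + m)) (Fin (l + m)) ℂ :=
  fun i => Matrix.of fun p q =>
    if h : l ≤ (i : ℕ) ∧ (p : ℕ) < l ∧ (q : ℕ) < l then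
      A ⟨(i : ℕ) - l, by have := i.isLt; omega⟩ ⟨p, h.2.1⟩ ⟨q, h.2.2⟩
    else 0

/-- Sum-type version of the padding. -/
noncomputable def padS {l m : ℕ} (A : Fin m → Matrix (Fin l) (Fin l) ℂ) :
    Fin l ⊕ Fin m → Matrix (Fin l ⊕ Fin m) (Fin l ⊕ Fin m) ℂ :=
  Sum.elim (fun _ => 0) (fun j => Matrix.fromBlocks (A j) 0 0 0)

lemma cubicPad_eq {l m : ℕ} (A : Fin m → Matrix (Fin l) (Fin l) ℂ) (k : Fin l ⊕ Fin m) :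
    cubicPad A (finSumFinEquiv k) =
      (padS A k).submatrix finSumFinEquiv.symm finSumFinEquiv.symm := by
  ext p q
  obtain ⟨p, rfl⟩ := finSumFinEquiv.surjective p
  obtain ⟨q, rfl⟩ := finSumFinEquiv.surjective q
  simp only [submatrix_apply, Equiv.symm_apply_apply]
  rcases k with i | j <;> rcases p with p | p <;> rcases q with q | q <;>
    simp only [cubicPad, padS, of_apply, Sum.elim_inl, Sum.elim_inr,
      finSumFinEquiv_apply_left, finSumFinEquiv_apply_right,
      Fin.coe_castAdd, Fin.coe_natAdd, fromBlocks_apply₁₁, fromBlocks_apply₁₂,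
      fromBlocks_apply₂₁, fromBlocks_apply₂₂, _root_.zero_apply, Matrix.zero_apply]
  · exact dif_neg (by omega)
  · exact dif_neg (by omega)
  · exact dif_neg (by omega)
  · exact dif_neg (by omega)
  · erw [dif_pos (⟨Nat.le_add_right l j, p.isLt, q.isLt⟩ : l ≤ l + (j : ℕ) ∧ (p : ℕ) < l ∧ (q : ℕ) < l)]
    simp only [Nat.add_sub_cancel_left, Fin.eta]
  · exact dif_neg (by omega)
  · exact dif_neg (by omega)
  · exact dif_neg (by omega)

/-- submatrix along an equivalence is injective -/
lemma submatrix_equiv_injective {α β : Type*} (e : α ≃ β) :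
    Function.Injective (fun M : Matrix β β ℂ => M.submatrix e e) := by
  intro M N h
  ext i j
  have := congrFun (congrFun h (e.symm i)) (e.symm j)
  simpa using this

lemma submatrix_equiv_injective' {α β : Type*} (e : α ≃ β) {M N : Matrix β β ℂ}
    (h : M.submatrix e e = N.submatrix e e) : M = N :=
  submatrix_equiv_injective e h

lemma mem_unitary_submatrix {α β : Type*} [Fintype α] [Fintype β] [DecidableEq α]
    [DecidableEq β] (e : α ≃ β) (M : Matrix β β ℂ) :
    M.submatrix e e ∈ Matrix.unitaryGroup α ℂ ↔ M ∈ Matrix.unitaryGroup β ℂ := by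
  rw [Matrix.mem_unitaryGroup_iff, Matrix.mem_unitaryGroup_iff]
  have : M.submatrix e e * star (M.submatrix e e) = (M * star M).submatrix e e := by
    rw [Matrix.star_eq_conjTranspose, Matrix.star_eq_conjTranspose,
      conjTranspose_submatrix, submatrix_mul_equiv]
  rw [this, ← Matrix.submatrix_one_equiv e]
  exact ⟨fun h => submatrix_equiv_injective e h, fun h => by rw [h]⟩

lemma sum_fromBlocks {l m : ℕ} {ι : Type*} (s : Finset ι)
    (f : ι → Matrix (Fin l) (Fin l) ℂ) :
    (∑ j ∈ s, Matrix.fromBlocks (f j) 0 0 (0 : Matrix (Fin m) (Fin m) ℂ)) =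
      Matrix.fromBlocks (∑ j ∈ s, f j) 0 0 0 := by
  ext i j
  rcases i with i | i <;> rcases j with j | j <;>
    simp [Matrix.sum_apply]


lemma sum_fromBlocks4 {n o p q : Type*} {ι : Type*} (s : Finset ι)
    (f : ι → Matrix n p ℂ) (g : ι → Matrix n q ℂ)
    (h : ι → Matrix o p ℂ) (d : ι → Matrix o q ℂ) :
    (∑ j ∈ s, Matrix.fromBlocks (f j) (g j) (h j) (d j)) =
      Matrix.fromBlocks (∑ j ∈ s, f j) (∑ j ∈ s, g j) (∑ j ∈ s, h j) (∑ j ∈ s, d j) := by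
  ext i j
  rcases i with i | i <;> rcases j with j | j <;> simp [Matrix.sum_apply]

lemma key {l m : ℕ} (A B : Fin m → Matrix (Fin l) (Fin l) ℂ)
    (hB : LinearIndependent ℂ B) :
    (∃ P ∈ Matrix.unitaryGroup (Fin l) ℂ, ∃ Q ∈ Matrix.unitaryGroup (Fin m) ℂ,
        ∀ k : Fin m, Pᵀ * A k * P = ∑ k' : Fin m, Q k' k • B k')
      ↔ (∃ P ∈ Matrix.unitaryGroup (Fin l ⊕ Fin m) ℂ,
          ∀ k : Fin l ⊕ Fin m,
            (∑ k' : Fin l ⊕ Fin m, P k' k • (Pᵀ * padS A k' * P)) = padS B k) := by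
  constructor
  · rintro ⟨P, hP, Q, hQ, h⟩
    have hP1 : P * Pᴴ = 1 := Matrix.mem_unitaryGroup_iff.mp hP
    have hQ1 : Qᴴ * Q = 1 := Matrix.mem_unitaryGroup_iff'.mp hQ
    have hQ2 : Q * Qᴴ = 1 := mul_eq_one_comm.mp hQ1
    refine ⟨Matrix.fromBlocks P 0 0 (Qᴴ), ?_, ?_⟩
    · rw [Matrix.mem_unitaryGroup_iff]
      calc Matrix.fromBlocks P 0 0 (Qᴴ) * star (Matrix.fromBlocks P 0 0 (Qᴴ))
          = Matrix.fromBlocks P 0 0 Qᴴ * Matrix.fromBlocks Pᴴ 0 0 Q := by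
            rw [Matrix.star_eq_conjTranspose, fromBlocks_conjTranspose]
            simp
        _ = 1 := by
            rw [fromBlocks_multiply]
            simp [hP1, hQ1, Matrix.fromBlocks_one]
    · intro k
      have h3 : ∀ j : Fin m,
          (Matrix.fromBlocks P 0 0 (Qᴴ))ᵀ * padS A (Sum.inr j) *
              (Matrix.fromBlocks P 0 0 (Qᴴ))
            = Matrix.fromBlocks (Pᵀ * A j * P) 0 0 0 := by
        intro j
        simp [padS, fromBlocks_transpose, fromBlocks_multiply]
      rw [Fintype.sum_sum_type]
      have h1 : (∑ i : Fin l, Matrix.fromBlocks P 0 0 (Qᴴ) (Sum.inl i) k •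
          ((Matrix.fromBlocks P 0 0 (Qᴴ))ᵀ * padS A (Sum.inl i) *
            Matrix.fromBlocks P 0 0 (Qᴴ))) = 0 := by
        apply Finset.sum_eq_zero
        intro i _
        simp [padS]
      rw [h1, zero_add]
      rcases k with i | j0
      · apply Finset.sum_eq_zero
        intro j _
        have : Matrix.fromBlocks P 0 0 (Qᴴ) (Sum.inr j) (Sum.inl i) = 0 := rfl
        rw [this, zero_smul]
      · have hent : ∀ j : Fin m,
            Matrix.fromBlocks P 0 0 (Qᴴ) (Sum.inr j) (Sum.inr j0) = Qᴴ j j0 := fun j => rfl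
        simp_rw [h3, hent, Matrix.fromBlocks_smul, smul_zero, sum_fromBlocks4]
        have hX : (∑ j : Fin m, Qᴴ j j0 • (Pᵀ * A j * P)) = B j0 := by
          calc ∑ j : Fin m, Qᴴ j j0 • (Pᵀ * A j * P)
              = ∑ j : Fin m, ∑ k' : Fin m, (Q k' j * Qᴴ j j0) • B k' := by
                refine Finset.sum_congr rfl fun j _ => ?_
                rw [h j, Finset.smul_sum]
                exact Finset.sum_congr rfl fun k' _ => by
                  rw [smul_smul, mul_comm]
            _ = ∑ k' : Fin m, (∑ j : Fin m, Q k' j * Qᴴ j j0) • B k' := by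
                rw [Finset.sum_comm]
                exact Finset.sum_congr rfl fun k' _ => (Finset.sum_smul).symm
            _ = ∑ k' : Fin m, ((Q * Qᴴ) k' j0) • B k' := by
                simp [Matrix.mul_apply]
            _ = B j0 := by
                rw [hQ2]
                simp [Matrix.one_apply]
        rw [hX]
        simp [padS]
  · rintro ⟨Pt, hPt, hcond⟩
    obtain ⟨P11, P12, P21, P22, rfl⟩ :
        ∃ (P11 : Matrix (Fin l) (Fin l) ℂ) (P12 : Matrix (Fin l) (Fin m) ℂ)
          (P21 : Matrix (Fin m) (Fin l) ℂ) (P22 : Matrix (Fin m) (Fin m) ℂ),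
          Matrix.fromBlocks P11 P12 P21 P22 = Pt :=
      ⟨Pt.toBlocks₁₁, Pt.toBlocks₁₂, Pt.toBlocks₂₁, Pt.toBlocks₂₂, fromBlocks_toBlocks Pt⟩
    -- extract the (1,1)-block equations
    have hE : ∀ k : Fin l ⊕ Fin m,
        (∑ j : Fin m, Matrix.fromBlocks P11 P12 P21 P22 (Sum.inr j) k •
            (P11ᵀ * A j * P11)) = (padS B k).toBlocks₁₁ := by
      intro k
      have h0 := hcond k
      rw [Fintype.sum_sum_type] at h0
      have h1 : (∑ i : Fin l, Matrix.fromBlocks P11 P12 P21 P22 (Sum.inl i) k •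
          ((Matrix.fromBlocks P11 P12 P21 P22)ᵀ * padS A (Sum.inl i) *
            Matrix.fromBlocks P11 P12 P21 P22)) = 0 :=
        Finset.sum_eq_zero fun i _ => by simp [padS]
      rw [h1, zero_add] at h0
      have h3 : ∀ j : Fin m,
          (Matrix.fromBlocks P11 P12 P21 P22)ᵀ * padS A (Sum.inr j) *
              Matrix.fromBlocks P11 P12 P21 P22
            = Matrix.fromBlocks (P11ᵀ * A j * P11) (P11ᵀ * A j * P12)
                (P12ᵀ * A j * P11) (P12ᵀ * A j * P12) := by
        intro j
        simp [padS, fromBlocks_transpose, fromBlocks_multiply, Matrix.mul_assoc]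
      simp_rw [h3, Matrix.fromBlocks_smul, sum_fromBlocks4] at h0
      have := congrArg Matrix.toBlocks₁₁ h0
      simpa using this
    have hMB : ∀ j0 : Fin m,
        (∑ j : Fin m, P22 j j0 • (P11ᵀ * A j * P11)) = B j0 := by
      intro j0
      have := hE (Sum.inr j0)
      simpa [padS] using this
    have hZ : ∀ i : Fin l,
        (∑ j : Fin m, P21 j i • (P11ᵀ * A j * P11)) = 0 := by
      intro i
      have := hE (Sum.inl i)
      simpa [padS] using this.trans
        (show toBlocks₁₁ (0 : Matrix (Fin l ⊕ Fin m) (Fin l ⊕ Fin m) ℂ) = 0 from rfl)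
    -- the linear map v ↦ ∑ v j • (P11ᵀ A j P11)
    set f : (Fin m → ℂ) →ₗ[ℂ] Matrix (Fin l) (Fin l) ℂ :=
      { toFun := fun v => ∑ j : Fin m, v j • (P11ᵀ * A j * P11)
        map_add' := by
          intro x y
          simp [add_smul, Finset.sum_add_distrib]
        map_smul' := by
          intro c x
          simp [smul_smul, Finset.smul_sum] } with hf
    set c : Fin m → (Fin m → ℂ) := fun j j' => P22 j' j with hc
    have hfc : ∀ j : Fin m, f (c j) = B j := fun j => hMB j
    have hlic : LinearIndependent ℂ c := by
      apply LinearIndependent.of_comp f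
      have : f ∘ c = B := funext hfc
      rw [this]; exact hB
    have hspan : Submodule.span ℂ (Set.range c) = ⊤ :=
      hlic.span_eq_top_of_card_eq_finrank'
        (by simp [Module.finrank_fintype_fun_eq_card])
    have hfinj : ∀ v : Fin m → ℂ, f v = 0 → v = 0 := by
      intro v hv
      have hvmem : v ∈ Submodule.span ℂ (Set.range c) := by rw [hspan]; trivial
      obtain ⟨a, ha⟩ := (Submodule.mem_span_range_iff_exists_fun ℂ).mp hvmem
      have h0 : (∑ j : Fin m, a j • B j) = 0 := by
        calc (∑ j : Fin m, a j • B j) = ∑ j : Fin m, a j • f (c j) := by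
              exact Finset.sum_congr rfl fun j _ => by rw [hfc]
          _ = f (∑ j : Fin m, a j • c j) := by rw [map_sum]; simp
          _ = f v := by rw [ha]
          _ = 0 := hv
      have ha0 : ∀ j, a j = 0 := Fintype.linearIndependent_iff.mp hB a h0
      rw [← ha]
      simp [ha0]
    -- P21 = 0
    have hP21 : P21 = 0 := by
      ext j i
      have := hfinj (fun j' => P21 j' i) (hZ i)
      have := congrFun this j
      simpa using this
    -- unitarity block equations
    have hu : star (Matrix.fromBlocks P11 P12 P21 P22) *
        Matrix.fromBlocks P11 P12 P21 P22 = 1 := Matrix.mem_unitaryGroup_iff'.mp hPt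
    rw [Matrix.star_eq_conjTranspose, fromBlocks_conjTranspose, fromBlocks_multiply,
      ← Matrix.fromBlocks_one, fromBlocks_inj] at hu
    obtain ⟨h11, h12, -, h22⟩ := hu
    rw [hP21] at h11 h12
    simp only [Matrix.conjTranspose_zero, Matrix.mul_zero, Matrix.zero_mul, add_zero] at h11 h12
    -- h11 : P11ᴴ * P11 = 1, h12 : P11ᴴ * P12 = 0
    have hP11u : P11 ∈ Matrix.unitaryGroup (Fin l) ℂ := Matrix.mem_unitaryGroup_iff'.mpr h11
    have hP11' : P11 * P11ᴴ = 1 := mul_eq_one_comm.mp h11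
    have hP12 : P12 = 0 := by
      calc P12 = (P11 * P11ᴴ) * P12 := by rw [hP11', Matrix.one_mul]
        _ = P11 * (P11ᴴ * P12) := by rw [Matrix.mul_assoc]
        _ = 0 := by rw [h12, Matrix.mul_zero]
    rw [hP12] at h22
    simp only [Matrix.conjTranspose_zero, Matrix.mul_zero, Matrix.zero_mul, zero_add] at h22
    -- h22 : P22ᴴ * P22 = 1
    have hP22' : P22 * P22ᴴ = 1 := mul_eq_one_comm.mp h22
    refine ⟨P11, hP11u, P22ᴴ, ?_, ?_⟩
    · exact Matrix.mem_unitaryGroup_iff.mpr (by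
        simpa [Matrix.star_eq_conjTranspose] using h22)
    · intro k
      calc P11ᵀ * A k * P11
          = ∑ j : Fin m, ((P22 * P22ᴴ) j k) • (P11ᵀ * A j * P11) := by
            rw [hP22']
            simp [Matrix.one_apply]
        _ = ∑ j : Fin m, ∑ k' : Fin m, (P22 j k' * P22ᴴ k' k) • (P11ᵀ * A j * P11) := by
            refine Finset.sum_congr rfl fun j _ => ?_
            rw [Matrix.mul_apply, Finset.sum_smul]
        _ = ∑ k' : Fin m, P22ᴴ k' k • ∑ j : Fin m, P22 j k' • (P11ᵀ * A j * P11) := by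
            rw [Finset.sum_comm]
            refine Finset.sum_congr rfl fun k' _ => ?_
            rw [Finset.smul_sum]
            exact Finset.sum_congr rfl fun j _ => by rw [smul_smul, mul_comm]
        _ = ∑ k' : Fin m, P22ᴴ k' k • B k' := by
            exact Finset.sum_congr rfl fun k' _ => by rw [hMB]

/-- Let `A, B ∈ T(l×l×m, ℂ)` with linearly independent frontal slices.
There are unitary `P ∈ U(l,ℂ)`, `Q ∈ U(m,ℂ)` with `Pᵗ A P = B^Q` iff there is a unitary
`P ∈ U(l+m,ℂ)` with `(Pᵗ Ã P)^P = B̃`. -/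
theorem stmt_11 (l m : ℕ) (A B : Fin m → Matrix (Fin l) (Fin l) ℂ)
    (hA : LinearIndependent ℂ A) (hB : LinearIndependent ℂ B) :
    (∃ P ∈ Matrix.unitaryGroup (Fin l) ℂ, ∃ Q ∈ Matrix.unitaryGroup (Fin m) ℂ,
        ∀ k : Fin m, Pᵀ * A k * P = ∑ k' : Fin m, Q k' k • B k')
      ↔ (∃ P ∈ Matrix.unitaryGroup (Fin (l + m)) ℂ,
          ∀ k : Fin (l + m),
            (∑ k' : Fin (l + m), P k' k • (Pᵀ * cubicPad A k' * P)) = cubicPad B k) := by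
  rw [key A B hB]
  have hsub_sum : ∀ {ι : Type} (s : Finset ι)
      (f : ι → Matrix (Fin l ⊕ Fin m) (Fin l ⊕ Fin m) ℂ),
      (∑ j ∈ s, f j).submatrix finSumFinEquiv.symm finSumFinEquiv.symm
        = ∑ j ∈ s, (f j).submatrix finSumFinEquiv.symm finSumFinEquiv.symm := by
    intro ι s f
    ext i j
    simp [Matrix.sum_apply]
  have transport : ∀ (P : Matrix (Fin (l + m)) (Fin (l + m)) ℂ) (k₀ : Fin l ⊕ Fin m),
      (∑ k' : Fin (l + m), P k' (finSumFinEquiv k₀) • (Pᵀ * cubicPad A k' * P))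
        = (∑ k₁ : Fin l ⊕ Fin m, (P.submatrix finSumFinEquiv finSumFinEquiv) k₁ k₀ •
            ((P.submatrix finSumFinEquiv finSumFinEquiv)ᵀ * padS A k₁ *
              (P.submatrix finSumFinEquiv finSumFinEquiv))).submatrix
            finSumFinEquiv.symm finSumFinEquiv.symm := by
    intro P k₀
    have step : ∀ k₁ : Fin l ⊕ Fin m,
        ((P.submatrix finSumFinEquiv finSumFinEquiv) k₁ k₀ •
          ((P.submatrix finSumFinEquiv finSumFinEquiv)ᵀ * padS A k₁ *
            (P.submatrix finSumFinEquiv finSumFinEquiv))).submatrix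
            finSumFinEquiv.symm finSumFinEquiv.symm
        = P (finSumFinEquiv k₁) (finSumFinEquiv k₀) •
            (Pᵀ * cubicPad A (finSumFinEquiv k₁) * P) := by
      intro k₁
      have hsmul : ∀ (r : ℂ) (X : Matrix (Fin l ⊕ Fin m) (Fin l ⊕ Fin m) ℂ),
          (r • X).submatrix (finSumFinEquiv (m := l) (n := m)).symm finSumFinEquiv.symm
            = r • (X.submatrix finSumFinEquiv.symm finSumFinEquiv.symm) := fun r X => rfl
      rw [hsmul]
      congr 1
      rw [← Matrix.submatrix_mul_equiv
            ((P.submatrix finSumFinEquiv finSumFinEquiv)ᵀ * padS A k₁)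
            (P.submatrix finSumFinEquiv finSumFinEquiv)
            finSumFinEquiv.symm finSumFinEquiv.symm finSumFinEquiv.symm,
          ← Matrix.submatrix_mul_equiv ((P.submatrix finSumFinEquiv finSumFinEquiv)ᵀ)
            (padS A k₁) finSumFinEquiv.symm finSumFinEquiv.symm finSumFinEquiv.symm,
          cubicPad_eq]
      congr 1
      · congr 1
        · rw [transpose_submatrix]
          ext i j
          simp
      · ext i j
        simp
    rw [hsub_sum]
    simp_rw [step]
    exact (Fintype.sum_equiv finSumFinEquiv _ _ (fun _ => rfl)).symm
  constructor
  · rintro ⟨Ps, hPs, hc⟩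
    refine ⟨Ps.submatrix finSumFinEquiv.symm finSumFinEquiv.symm,
      (mem_unitary_submatrix finSumFinEquiv.symm Ps).mpr hPs, ?_⟩
    intro k
    obtain ⟨k₀, rfl⟩ := finSumFinEquiv.surjective k
    have hPP : ((Ps.submatrix finSumFinEquiv.symm finSumFinEquiv.symm).submatrix
        finSumFinEquiv finSumFinEquiv) = Ps := by
      ext i j
      simp
    rw [transport _ k₀, hPP, hc k₀, cubicPad_eq]
  · rintro ⟨Pt, hPt, hc⟩
    refine ⟨Pt.submatrix finSumFinEquiv finSumFinEquiv,
      (mem_unitary_submatrix finSumFinEquiv Pt).mpr hPt, ?_⟩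
    intro k₀
    apply submatrix_equiv_injective' (finSumFinEquiv (m := l) (n := m)).symm
    rw [← transport Pt k₀, hc (finSumFinEquiv k₀), cubicPad_eq]
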